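/- arXiv:2307.08726 — 2 statements merged into one kernel-verified Lean document; each statement's English description precedes it below -/
import Mathlib

section
/- Perfect privacy of additive secret sharing: let F be a finite field and N ≥ 1. For the additive (N,N)-sharing Share(s, (r_1,...,r_{N-1})) = (r_1, ..., r_{N-1}, s - Σ_{i=1}^{N-1} r_i) with (r_1,...,r_{N-1}) uniform in F^{N-1}, for any s_0, s_1 ∈ F and any subset I ⊆ {1,...,N} with |I| = N-1, the distribution of the shares indexed by I is identical (uniform on F^{N-1}) whether the secret is s_0 or s_1. -/
lemma map_uniform_equiv {α β : Type*} [Fintype α] [Fintype β] [Nonempty α] [Nonempty β]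
    (e : α ≃ β) : (PMF.uniformOfFintype α).map e = PMF.uniformOfFintype β := by
  ext b
  rw [PMF.map_apply, PMF.uniformOfFintype_apply,
    tsum_eq_single (e.symm b) (by
      intro a ha
      rw [if_neg]
      intro hb
      exact ha (by simp [hb]))]
  simp [PMF.uniformOfFintype_apply, Fintype.card_congr e]

lemma share_inj (F : Type*) [Field F] [Fintype F] [DecidableEq F] (N : ℕ)
    (s : F) (I : Finset (Fin (N + 1))) (hI : I.card = N) :
    Function.Injective (fun r : Fin N → F => fun i : I =>
      (Fin.snoc (α := fun _ => F) r (s - ∑ j : Fin N, r j) (i : Fin (N + 1)) : F)) := by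
  intro r r' h
  have h' : ∀ i : Fin (N+1), i ∈ I →
      Fin.snoc (α := fun _ => F) r (s - ∑ j : Fin N, r j) i
        = Fin.snoc (α := fun _ => F) r' (s - ∑ j : Fin N, r' j) i := by
    intro i hi
    exact congrFun h ⟨i, hi⟩
  have hcompl : Iᶜ.card = 1 := by
    have := Finset.card_compl I
    simp [hI] at this
    omega
  obtain ⟨k, hk⟩ := Finset.card_eq_one.mp hcompl
  have hmem : ∀ j : Fin (N+1), j ≠ k → j ∈ I := by
    intro j hj
    by_contra hc
    have : j ∈ Iᶜ := Finset.mem_compl.mpr hc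
    rw [hk, Finset.mem_singleton] at this
    exact hj this
  rcases Fin.eq_castSucc_or_eq_last k with ⟨k', rfl⟩ | rfl
  case inr =>
    funext j
    have := h' j.castSucc (hmem _ (by simp [Fin.ext_iff]; omega))
    simpa using this
  all_goals
    have hsum : ∑ j : Fin N, r j = ∑ j : Fin N, r' j := by
      have := h' (Fin.last N) (hmem _ (by simp [Fin.ext_iff]; omega))
      simp at this
      exact this
    have heq : ∀ j : Fin N, j ≠ k' → r j = r' j := by
      intro j hj
      have := h' j.castSucc (hmem _ (by simp [Fin.ext_iff]; exact fun hc => hj (Fin.ext hc)))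
      simpa using this
    funext j
    by_cases hj : j = k'
    · subst hj
      have h1 := Finset.add_sum_erase Finset.univ r (Finset.mem_univ j)
      have h2 := Finset.add_sum_erase Finset.univ r' (Finset.mem_univ j)
      have h3 : ∑ x ∈ Finset.univ.erase j, r x = ∑ x ∈ Finset.univ.erase j, r' x :=
        Finset.sum_congr rfl fun x hx => heq x (Finset.ne_of_mem_erase hx)
      rw [← h1, ← h2, h3] at hsum
      exact add_right_cancel hsum
    · exact heq j hj

/-- Perfect privacy of additive secret sharing: with N+1 parties and shares
(r_1, ..., r_N, s - Σ r_i) for uniform randomness r ∈ F^N, for any two secrets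
s₀, s₁ and any subset I of N of the N+1 parties, the distribution of the shares
indexed by I is the uniform distribution on F^I, in particular identical for s₀
and s₁. -/
theorem additive_sharing_privacy (F : Type*) [Field F] [Fintype F] [DecidableEq F] (N : ℕ)
    (s₀ s₁ : F) (I : Finset (Fin (N + 1))) (hI : I.card = N) :
    (PMF.uniformOfFintype (Fin N → F)).map
        (fun r => fun i : I => (Fin.snoc (α := fun _ => F) r (s₀ - ∑ j : Fin N, r j) (i : Fin (N + 1)) : F))
      = (PMF.uniformOfFintype (Fin N → F)).map
        (fun r => fun i : I => (Fin.snoc (α := fun _ => F) r (s₁ - ∑ j : Fin N, r j) (i : Fin (N + 1)) : F)) ∧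
    (PMF.uniformOfFintype (Fin N → F)).map
        (fun r => fun i : I => (Fin.snoc (α := fun _ => F) r (s₀ - ∑ j : Fin N, r j) (i : Fin (N + 1)) : F))
      = PMF.uniformOfFintype (I → F) := by
  have key : ∀ s : F, (PMF.uniformOfFintype (Fin N → F)).map
      (fun r => fun i : I => (Fin.snoc (α := fun _ => F) r (s - ∑ j : Fin N, r j) (i : Fin (N + 1)) : F))
      = PMF.uniformOfFintype (I → F) := by
    intro s
    have hbij : Function.Bijective (fun r : Fin N → F => fun i : I =>
        (Fin.snoc (α := fun _ => F) r (s - ∑ j : Fin N, r j) (i : Fin (N + 1)) : F)) := by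
      rw [Fintype.bijective_iff_injective_and_card]
      refine ⟨share_inj F N s I hI, ?_⟩
      simp [Fintype.card_fun, hI]
    exact map_uniform_equiv (Equiv.ofBijective _ hbij)
  exact ⟨(key s₀).trans (key s₁).symm, key s₀⟩
end

section
/- Perfect ℓ-privacy of Shamir's secret sharing: with F a finite field, distinct nonzero evaluation points e_1,...,e_N ∈ F, threshold ℓ+1, and uniform randomness (r_1,...,r_ℓ) ∈ F^ℓ, for any secrets s_0, s_1 ∈ F and any I ⊆ {1,...,N} with |I| = ℓ, the joint distribution of (P(e_i))_{i∈I} where P(X) = s + Σ_{j=1}^ℓ r_j X^j is the uniform distribution on F^ℓ, hence identical for s = s_0 and s = s_1. -/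
open Finset

lemma pmf_map_uniform_of_bijective {α β : Type*} [Fintype α] [Nonempty α]
    [Fintype β] [Nonempty β] [DecidableEq β] (f : α → β) (hf : Function.Bijective f) :
    (PMF.uniformOfFintype α).map f = PMF.uniformOfFintype β := by
  ext b
  obtain ⟨a₀, ha₀⟩ := hf.surjective b
  rw [PMF.map_apply, PMF.uniformOfFintype_apply]
  rw [tsum_eq_single a₀ (by
    intro a ha
    simp only [ite_eq_right_iff]
    intro hb
    exact (ha (hf.injective (ha₀.trans hb)).symm).elim)]
  simp [← ha₀, Fintype.card_of_bijective hf]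

/-- Perfect ℓ-privacy of Shamir's secret sharing: for any ℓ of the N shares, the
joint distribution of the shares (P(e_i))_{i∈I}, over uniform randomness
(r_1, ..., r_ℓ), is uniform on F^I and hence identical for any two secrets. -/
theorem shamir_privacy (F : Type*) [Field F] [Fintype F] [DecidableEq F] (N ℓ : ℕ)
    (hℓ : ℓ + 1 ≤ N) (e : Fin N → F) (he : Function.Injective e) (he0 : ∀ i, e i ≠ 0)
    (s₀ s₁ : F) (I : Finset (Fin N)) (hI : I.card = ℓ) :
    (PMF.uniformOfFintype (Fin ℓ → F)).map
        (fun r => fun i : I => s₀ + ∑ k : Fin ℓ, r k * (e i) ^ ((k : ℕ) + 1))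
      = PMF.uniformOfFintype (I → F) ∧
    (PMF.uniformOfFintype (Fin ℓ → F)).map
        (fun r => fun i : I => s₀ + ∑ k : Fin ℓ, r k * (e i) ^ ((k : ℕ) + 1))
      = (PMF.uniformOfFintype (Fin ℓ → F)).map
        (fun r => fun i : I => s₁ + ∑ k : Fin ℓ, r k * (e i) ^ ((k : ℕ) + 1)) := by
  have key : ∀ s : F, Function.Bijective
      (fun r => fun i : I => s + ∑ k : Fin ℓ, r k * (e i) ^ ((k : ℕ) + 1) :
        (Fin ℓ → F) → (I → F)) := by
    intro s
    have hinj : Function.Injective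
        (fun r => fun i : I => s + ∑ k : Fin ℓ, r k * (e i) ^ ((k : ℕ) + 1) :
          (Fin ℓ → F) → (I → F)) := by
      intro r r' hrr'
      set p : Polynomial F := ∑ k : Fin ℓ, Polynomial.C (r k - r' k) * Polynomial.X ^ ((k : ℕ) + 1)
        with hp
      have hdeg : p.natDegree ≤ ℓ := by
        refine (Polynomial.natDegree_sum_le _ _).trans ?_
        simp only [Finset.fold_max_le]
        refine ⟨Nat.zero_le _, fun k _ => ?_⟩
        exact (Polynomial.natDegree_C_mul_le _ _).trans
          ((Polynomial.natDegree_X_pow_le _).trans (Nat.succ_le_of_lt k.2))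
      have heval : ∀ x ∈ insert (0 : F) (I.image e), p.eval x = 0 := by
        intro x hx
        rcases Finset.mem_insert.mp hx with hx0 | hxi
        · subst hx0; simp [hp, Polynomial.eval_finset_sum]
        · obtain ⟨i, hi, rfl⟩ := Finset.mem_image.mp hxi
          have h1 := congrFun hrr' ⟨i, hi⟩
          simp only at h1
          have h2 : ∑ k : Fin ℓ, r k * e i ^ ((k : ℕ) + 1)
              = ∑ k : Fin ℓ, r' k * e i ^ ((k : ℕ) + 1) := by
            exact add_left_cancel h1
          simp only [hp, Polynomial.eval_finset_sum, Polynomial.eval_mul, Polynomial.eval_C,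
            Polynomial.eval_pow, Polynomial.eval_X, sub_mul, Finset.sum_sub_distrib, h2,
            sub_self]
      have h0 : (0 : F) ∉ I.image e := by
        intro h
        obtain ⟨i, _, hi⟩ := Finset.mem_image.mp h
        exact he0 i hi
      have hcard : (insert (0 : F) (I.image e)).card = ℓ + 1 := by
        rw [Finset.card_insert_of_notMem h0, Finset.card_image_of_injective _ he, hI]
      have hp0 : p = 0 := Polynomial.eq_zero_of_natDegree_lt_card_of_eval_eq_zero' p _
        heval (by omega)
      funext k
      have hc : p.coeff ((k : ℕ) + 1) = r k - r' k := by
        simp only [hp, Polynomial.finset_sum_coeff, Polynomial.coeff_C_mul,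
          Polynomial.coeff_X_pow]
        rw [Finset.sum_eq_single k]
        · simp
        · intro j _ hjk
          have : (j : ℕ) + 1 ≠ (k : ℕ) + 1 := by
            simp only [ne_eq, Nat.add_right_cancel_iff, Fin.val_eq_val]
            exact hjk
          simp only [if_neg (Ne.symm this)]
          ring
        · simp
      rw [hp0] at hc
      simp only [Polynomial.coeff_zero] at hc
      exact sub_eq_zero.mp hc.symm
    exact (Fintype.bijective_iff_injective_and_card _).mpr ⟨hinj, by
      simp [Fintype.card_fun, hI]⟩
  refine ⟨pmf_map_uniform_of_bijective _ (key s₀), ?_⟩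
  rw [pmf_map_uniform_of_bijective _ (key s₀), pmf_map_uniform_of_bijective _ (key s₁)]
end
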